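/- arXiv:2106.10559 — 5 statements merged into one kernel-verified Lean document; each statement's English description precedes it below -/
import Mathlib

section
/- For every integer p ≥ 2, the function f_p : [0,1] → ℝ defined by f_p(x) = 1 - x^p(1-x)/(1-x^p) for x ∈ [0,1) and f_p(1) = 1 - 1/p is Lipschitz with some constant strictly less than 1 (i.e., f_p is a contraction on [0,1]). -/
/-!
On `[0,1]` the function is `1 - g` with `g x = xᵖ / S x` and `S x = ∑_{i<p} xⁱ`. One has
`xᵖ S y - yᵖ S x = (x - y) N(x,y)`, where `N(x,y)` is the sum of the monomials `xᵃ yᵇ` with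
`a, b < p` and `a + b ≥ p - 1`. These are among the monomials of `S x * S y` but miss `x⁰y⁰ = 1`,
so `0 ≤ N ≤ S x * S y - 1` on `[0,1]²`, and therefore
`|g x - g y| ≤ (1 - 1 / (S x * S y)) |x - y| ≤ (1 - 1/p²) |x - y|`.
-/

open Finset

/-- `N(x,y)`, built from the diagonal `a + b = p - 1` plus the previous triangle shifted by `xy`. -/
noncomputable def upperTriangleSum : ℕ → ℝ → ℝ → ℝ
  | 0, _, _ => 0
  | p + 1, x, y => ∑ k ∈ range (p + 1), x ^ k * y ^ (p - k) + x * y * upperTriangleSum p x y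

theorem pow_mul_geom_sum_sub_pow_mul_geom_sum (p : ℕ) (x y : ℝ) :
    x ^ p * ∑ i ∈ range p, y ^ i - y ^ p * ∑ i ∈ range p, x ^ i
      = (x - y) * upperTriangleSum p x y := by
  induction p with
  | zero => simp [upperTriangleSum]
  | succ p ih =>
    have diag := geom_sum₂_mul x y (p + 1)
    simp only [Nat.add_sub_cancel] at diag
    rw [geom_sum_succ, geom_sum_succ, upperTriangleSum]
    linear_combination x * y * ih - diag

theorem upperTriangleSum_nonneg (p : ℕ) {x y : ℝ} (hx : 0 ≤ x) (hy : 0 ≤ y) :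
    0 ≤ upperTriangleSum p x y := by
  induction p with
  | zero => simp [upperTriangleSum]
  | succ p ih => rw [upperTriangleSum]; positivity

theorem geom_sum_mul_geom_sum_sub_upperTriangleSum_succ (p : ℕ) (x y : ℝ) :
    (∑ i ∈ range (p + 1), x ^ i) * (∑ i ∈ range (p + 1), y ^ i) - upperTriangleSum (p + 1) x y
      = (x * ∑ i ∈ range p, x ^ i + 1 - ∑ k ∈ range (p + 1), x ^ k * y ^ (p - k))
        + y * ∑ i ∈ range p, y ^ i
        + x * y * ((∑ i ∈ range p, x ^ i) * (∑ i ∈ range p, y ^ i) - upperTriangleSum p x y) := by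
  rw [geom_sum_succ, geom_sum_succ, upperTriangleSum]
  ring

theorem sum_pow_mul_pow_sub_le (p : ℕ) {x y : ℝ} (hx : 0 ≤ x) (hy₀ : 0 ≤ y) (hy₁ : y ≤ 1) :
    ∑ k ∈ range (p + 1), x ^ k * y ^ (p - k) ≤ x * ∑ i ∈ range p, x ^ i + y ^ p := by
  rw [sum_range_succ', mul_sum]
  simp only [pow_zero, one_mul, Nat.sub_zero]
  refine add_le_add (sum_le_sum fun k _ => ?_) le_rfl
  rw [← pow_succ']
  exact mul_le_of_le_one_right (by positivity) (pow_le_one₀ hy₀ hy₁)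

theorem upperTriangleSum_le (p : ℕ) {x y : ℝ} (hx : x ∈ Set.Icc (0 : ℝ) 1)
    (hy : y ∈ Set.Icc (0 : ℝ) 1) :
    upperTriangleSum p x y ≤ (∑ i ∈ range p, x ^ i) * (∑ i ∈ range p, y ^ i) := by
  induction p with
  | zero => simp [upperTriangleSum]
  | succ p ih =>
    have diag := sum_pow_mul_pow_sub_le p hx.1 hy.1 hy.2
    have hyp : y ^ p ≤ 1 := pow_le_one₀ hy.1 hy.2
    have hyS : 0 ≤ y * ∑ i ∈ range p, y ^ i := by have := hy.1; positivity
    have hshift := mul_nonneg (mul_nonneg hx.1 hy.1) (sub_nonneg.2 ih)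
    linarith [geom_sum_mul_geom_sum_sub_upperTriangleSum_succ p x y]

theorem upperTriangleSum_add_one_le {p : ℕ} (hp : 2 ≤ p) {x y : ℝ} (hx : x ∈ Set.Icc (0 : ℝ) 1)
    (hy : y ∈ Set.Icc (0 : ℝ) 1) :
    upperTriangleSum p x y + 1 ≤ (∑ i ∈ range p, x ^ i) * (∑ i ∈ range p, y ^ i) := by
  obtain ⟨q, rfl⟩ := Nat.exists_eq_add_of_le' hp
  have diag := sum_pow_mul_pow_sub_le (q + 1) hx.1 hy.1 hy.2
  have hyS : y ^ (q + 1) ≤ y * ∑ i ∈ range (q + 1), y ^ i := by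
    rw [sum_range_succ, pow_succ', mul_add, le_add_iff_nonneg_left]
    have := hy.1
    positivity
  have hshift :=
    mul_nonneg (mul_nonneg hx.1 hy.1) (sub_nonneg.2 (upperTriangleSum_le (q + 1) hx hy))
  linarith [geom_sum_mul_geom_sum_sub_upperTriangleSum_succ (q + 1) x y]

theorem geom_sum_le_of_le_one (n : ℕ) {x : ℝ} (hx₀ : 0 ≤ x) (hx₁ : x ≤ 1) :
    ∑ i ∈ range n, x ^ i ≤ n := by
  simpa using sum_le_card_nsmul (range n) (x ^ ·) 1 fun i _ => pow_le_one₀ hx₀ hx₁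

theorem dist_pow_div_geom_sum_le {p : ℕ} (hp : 2 ≤ p) {x y : ℝ} (hx : x ∈ Set.Icc (0 : ℝ) 1)
    (hy : y ∈ Set.Icc (0 : ℝ) 1) :
    dist (x ^ p / ∑ i ∈ range p, x ^ i) (y ^ p / ∑ i ∈ range p, y ^ i)
      ≤ (1 - 1 / (p : ℝ) ^ 2) * dist x y := by
  set Sx := ∑ i ∈ range p, x ^ i
  set Sy := ∑ i ∈ range p, y ^ i
  have hSx : 0 < Sx := geom_sum_pos hx.1 (by omega)
  have hSy : 0 < Sy := geom_sum_pos hy.1 (by omega)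
  have hP : 0 < Sx * Sy := mul_pos hSx hSy
  have hPp : Sx * Sy ≤ (p : ℝ) ^ 2 := by
    rw [sq]
    exact mul_le_mul (geom_sum_le_of_le_one p hx.1 hx.2) (geom_sum_le_of_le_one p hy.1 hy.2)
      hSy.le p.cast_nonneg
  have hdiff : x ^ p / Sx - y ^ p / Sy = (x - y) * upperTriangleSum p x y / (Sx * Sy) := by
    rw [div_sub_div _ _ hSx.ne' hSy.ne', ← pow_mul_geom_sum_sub_pow_mul_geom_sum]
    ring
  rw [Real.dist_eq, Real.dist_eq, hdiff, abs_div, abs_mul,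
    abs_of_nonneg (upperTriangleSum_nonneg p hx.1 hy.1), abs_of_pos hP, mul_div_assoc, mul_comm]
  gcongr
  calc upperTriangleSum p x y / (Sx * Sy) ≤ 1 - 1 / (Sx * Sy) := by
        rw [le_sub_iff_add_le, ← add_div, div_le_one hP]
        exact upperTriangleSum_add_one_le hp hx hy
    _ ≤ 1 - 1 / (p : ℝ) ^ 2 := by gcongr

theorem ite_eq_one_sub_pow_div_geom_sum (p : ℕ) (x : ℝ) :
    (if x = 1 then 1 - 1 / (p : ℝ) else 1 - x ^ p * (1 - x) / (1 - x ^ p))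
      = 1 - x ^ p / ∑ i ∈ range p, x ^ i := by
  split_ifs with hx
  · simp [hx]
  · rw [← mul_neg_geom_sum, mul_comm (1 - x), mul_div_mul_right _ _ (sub_ne_zero.mpr (Ne.symm hx))]

/-- For every integer `p ≥ 2`, the function `f_p : [0,1] → ℝ` defined by
`f_p(x) = 1 - x^p (1-x)/(1-x^p)` for `x ∈ [0,1)` and `f_p(1) = 1 - 1/p`
is Lipschitz on `[0,1]` with some constant strictly less than `1`. -/
theorem stmt_0 (p : ℕ) (hp : 2 ≤ p) :
    ∃ K : NNReal, (K : ℝ) < 1 ∧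
      LipschitzOnWith K
        (fun x : ℝ => if x = 1 then 1 - 1 / (p : ℝ)
          else 1 - x ^ p * (1 - x) / (1 - x ^ p))
        (Set.Icc (0 : ℝ) 1) := by
  refine ⟨(1 - 1 / (p : ℝ) ^ 2).toNNReal, ?_, LipschitzOnWith.of_dist_le' fun x hx y hy => ?_⟩
  · have : (0 : ℝ) < 1 / (p : ℝ) ^ 2 := by positivity
    rw [Real.coe_toNNReal', max_lt_iff]
    constructor <;> linarith
  · simp only [ite_eq_one_sub_pow_div_geom_sum, dist_sub_left]
    exact dist_pow_div_geom_sum_le hp hx hy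
end

section
/- For every integer p ≥ 2, the derivative of f_p at every x ∈ (0,1) satisfies f_p'(x) = -x^{p-1}(x^{p+1} - (p+1)x + p)/(1-x^p)^2, and there exists ε > 0 such that f_p'(x) ≤ 1 - ε for all x ∈ (0,1). -/
/-! The derivative is nonpositive on `(0,1)`, so `ε = 1` works: the factor
`x^(p+1) - (p+1)x + p` is Bernoulli's inequality `x^(p+1) ≥ 1 + (p+1)(x-1)`. -/

theorem hasDerivAt_one_sub_pow_mul_one_sub_div {p : ℕ} {x : ℝ} (hx : x ^ p ≠ 1) :
    HasDerivAt (fun x : ℝ => 1 - x ^ p * (1 - x) / (1 - x ^ p))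
      (-(x ^ (p - 1) * (x ^ (p + 1) - ((p : ℝ) + 1) * x + (p : ℝ)) / (1 - x ^ p) ^ 2)) x := by
  obtain ⟨k, rfl⟩ : ∃ k, p = k + 1 := Nat.exists_eq_add_one.mpr <| Nat.pos_of_ne_zero <| by
    rintro rfl
    exact hx (pow_zero x)
  have hden : (1 : ℝ) - x ^ (k + 1) ≠ 0 := sub_ne_zero.mpr (Ne.symm hx)
  have hpow := hasDerivAt_pow (k + 1) x
  refine (((hpow.mul ((hasDerivAt_id' x).const_sub 1)).div (hpow.const_sub 1) hden).const_sub 1)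
    |>.congr_deriv ?_
  simp only [Pi.mul_apply, Nat.add_sub_cancel, Nat.cast_add_one]
  field_simp
  ring

theorem pow_succ_sub_mul_add_nonneg {x : ℝ} (hx : -1 ≤ x) (n : ℕ) :
    0 ≤ x ^ (n + 1) - ((n : ℝ) + 1) * x + n := by
  have hbernoulli := one_add_mul_le_pow (a := x - 1) (by linarith) (n + 1)
  rw [add_sub_cancel] at hbernoulli
  push_cast at hbernoulli
  linarith

theorem deriv_one_sub_pow_mul_one_sub_div_nonpos {p : ℕ} {x : ℝ} (hx₀ : 0 ≤ x) (hx : x ^ p ≠ 1) :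
    deriv (fun x : ℝ => 1 - x ^ p * (1 - x) / (1 - x ^ p)) x ≤ 0 := by
  rw [(hasDerivAt_one_sub_pow_mul_one_sub_div hx).deriv, neg_nonpos]
  exact div_nonneg (mul_nonneg (pow_nonneg hx₀ _) (pow_succ_sub_mul_add_nonneg (by linarith) p))
    (sq_nonneg _)

/-- For `p ≥ 2` and `f_p(x) = 1 - x^p (1-x)/(1-x^p)` on `(0,1)`:
the derivative is `f_p'(x) = -x^(p-1) (x^(p+1) - (p+1)x + p)/(1-x^p)^2`,
and there is `ε > 0` with `f_p'(x) ≤ 1 - ε` for all `x ∈ (0,1)`. -/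
theorem stmt_1 (p : ℕ) (hp : 2 ≤ p) :
    (∀ x ∈ Set.Ioo (0 : ℝ) 1,
      HasDerivAt (fun x : ℝ => 1 - x ^ p * (1 - x) / (1 - x ^ p))
        (-(x ^ (p - 1) * (x ^ (p + 1) - ((p : ℝ) + 1) * x + (p : ℝ)) / (1 - x ^ p) ^ 2)) x) ∧
    ∃ ε > (0 : ℝ), ∀ x ∈ Set.Ioo (0 : ℝ) 1,
      deriv (fun x : ℝ => 1 - x ^ p * (1 - x) / (1 - x ^ p)) x ≤ 1 - ε := by
  have hpow_ne_one : ∀ x ∈ Set.Ioo (0 : ℝ) 1, x ^ p ≠ 1 := fun x ⟨hx₀, hx₁⟩ =>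
    (pow_lt_one₀ hx₀.le hx₁ (by omega)).ne
  refine ⟨fun x hx => hasDerivAt_one_sub_pow_mul_one_sub_div (hpow_ne_one x hx), 1, one_pos,
    fun x hx => ?_⟩
  rw [sub_self]
  exact deriv_one_sub_pow_mul_one_sub_div_nonpos hx.1.le (hpow_ne_one x hx)
end

section
/- For integers p, q ≥ 2, the system of equations α^p + β^q = 1 and α^p(1-α) = β^q(1-β) has a unique solution (α, β) in the open square (0,1)². -/
noncomputable def Sg (p : ℕ) (x : ℝ) : ℝ := ∑ i ∈ Finset.range p, x ^ i
noncomputable def fg (p : ℕ) (x : ℝ) : ℝ := x ^ p / Sg p x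

lemma Sg_ge_one {p : ℕ} (hp : 1 ≤ p) {x : ℝ} (hx : 0 ≤ x) : 1 ≤ Sg p x := by
  have h0 : (0:ℕ) ∈ Finset.range p := Finset.mem_range.mpr hp
  have := Finset.single_le_sum (f := fun i => x ^ i) (fun i _ => pow_nonneg hx i) h0
  simpa [Sg] using this

lemma Sg_pos {p : ℕ} (hp : 1 ≤ p) {x : ℝ} (hx : 0 ≤ x) : 0 < Sg p x :=
  lt_of_lt_of_le one_pos (Sg_ge_one hp hx)

lemma Sg_geom (p : ℕ) (x : ℝ) : (x - 1) * Sg p x = x ^ p - 1 := by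
  rw [Sg, mul_comm]; exact geom_sum_mul x p

lemma Sg_lt {p : ℕ} (hp : 2 ≤ p) {x y : ℝ} (hx : 0 ≤ x) (hxy : x < y) :
    Sg p x < Sg p y := by
  refine Finset.sum_lt_sum (fun i _ => pow_le_pow_left₀ hx hxy.le i)
    ⟨1, Finset.mem_range.mpr hp, ?_⟩
  simpa using pow_lt_pow_left₀ hxy hx (by norm_num : (1:ℕ) ≠ 0)

lemma fg_eq {p : ℕ} (hp : 1 ≤ p) {x : ℝ} (hx : 0 ≤ x) :
    fg p x = x - 1 + 1 / Sg p x := by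
  have hS := (Sg_pos hp hx).ne'
  rw [fg]
  field_simp
  linear_combination -(Sg_geom p x)

lemma fg_lt {p : ℕ} (hp : 2 ≤ p) {x y : ℝ} (hx : 0 ≤ x) (hxy : x < y) :
    fg p y - fg p x < y - x := by
  have h1 : 0 < Sg p x := Sg_pos (by omega) hx
  have h2 : Sg p x < Sg p y := Sg_lt hp hx hxy
  have h3 : 1 / Sg p y < 1 / Sg p x := one_div_lt_one_div_of_lt h1 h2
  rw [fg_eq (by omega) hx, fg_eq (by omega) (le_trans hx hxy.le)]
  linarith

lemma fg_nonneg {p : ℕ} (hp : 1 ≤ p) {x : ℝ} (hx : 0 ≤ x) : 0 ≤ fg p x :=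
  div_nonneg (pow_nonneg hx p) (Sg_pos hp hx).le

lemma fg_pos {p : ℕ} (hp : 1 ≤ p) {x : ℝ} (hx : 0 < x) : 0 < fg p x :=
  div_pos (pow_pos hx p) (Sg_pos hp hx.le)

lemma fg_le_self {p : ℕ} (hp : 1 ≤ p) {x : ℝ} (hx : 0 ≤ x) : fg p x ≤ x := by
  have hS := Sg_pos hp hx
  rw [fg, div_le_iff₀ hS]
  have hmem : p - 1 ∈ Finset.range p := Finset.mem_range.mpr (by omega)
  have := Finset.single_le_sum (f := fun i => x ^ (i + 1))
    (fun i _ => pow_nonneg hx _) hmem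
  have hx1 : x ^ (p - 1 + 1) = x ^ p := by congr 1; omega
  calc x ^ p = x ^ (p - 1 + 1) := hx1.symm
    _ ≤ ∑ i ∈ Finset.range p, x ^ (i + 1) := this
    _ = x * Sg p x := by rw [Sg, Finset.mul_sum]; exact Finset.sum_congr rfl (fun i _ => by ring)

lemma fg_mono {p : ℕ} (hp : 1 ≤ p) {x y : ℝ} (hx : 0 ≤ x) (hxy : x ≤ y) :
    fg p x ≤ fg p y := by
  have hy : 0 ≤ y := le_trans hx hxy
  rw [fg, fg, div_le_div_iff₀ (Sg_pos hp hx) (Sg_pos hp hy)]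
  rw [Sg, Sg, Finset.mul_sum, Finset.mul_sum]
  refine Finset.sum_le_sum (fun k hk => ?_)
  have hk' : k < p := Finset.mem_range.mp hk
  have e1 : x ^ p = x ^ k * x ^ (p - k) := by rw [← pow_add]; congr 1; omega
  have e2 : y ^ p = y ^ k * y ^ (p - k) := by rw [← pow_add]; congr 1; omega
  rw [e1, e2]
  have h1 : x ^ (p-k) ≤ y ^ (p-k) := pow_le_pow_left₀ hx hxy _
  have h2 : 0 ≤ x ^ k * y ^ k := mul_nonneg (pow_nonneg hx k) (pow_nonneg hy k)
  nlinarith [pow_nonneg hx k, pow_nonneg hy k]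

lemma Sg_cont (p : ℕ) : Continuous (Sg p) := by
  unfold Sg
  exact continuous_finset_sum _ (fun i _ => continuous_pow i)

lemma sys_iff {p q : ℕ} (hp : 2 ≤ p) (hq : 2 ≤ q) {a b : ℝ}
    (ha : a ∈ Set.Ioo (0:ℝ) 1) (hb : b ∈ Set.Ioo (0:ℝ) 1) :
    (a ^ p + b ^ q = 1 ∧ a ^ p * (1 - a) = b ^ q * (1 - b)) ↔
      (1 - b = fg p a ∧ 1 - a = fg q b) := by
  obtain ⟨ha0, ha1⟩ := ha
  obtain ⟨hb0, hb1⟩ := hb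
  have hSa := Sg_pos (by omega : 1 ≤ p) ha0.le
  have hSb := Sg_pos (by omega : 1 ≤ q) hb0.le
  have hga := Sg_geom p a
  have hgb := Sg_geom q b
  have hane : (1:ℝ) - a ≠ 0 := ne_of_gt (by linarith)
  have hbne : (1:ℝ) - b ≠ 0 := ne_of_gt (by linarith)
  rw [fg, fg, eq_div_iff hSa.ne', eq_div_iff hSb.ne']
  constructor
  · rintro ⟨e1, e2⟩
    have hba : b ^ q = (1 - a) * Sg p a := by linear_combination e1 + hga
    have hab : a ^ p = (1 - b) * Sg q b := by linear_combination e1 + hgb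
    constructor
    · have hcan : (1 - a) * ((1 - b) * Sg p a) = (1 - a) * a ^ p := by
        linear_combination (-(1 - b)) * hba - e2
      exact mul_left_cancel₀ hane hcan
    · have hcan : (1 - b) * ((1 - a) * Sg q b) = (1 - b) * b ^ q := by
        linear_combination (-(1 - a)) * hab + e2
      exact mul_left_cancel₀ hbne hcan
  · rintro ⟨h1, h2⟩
    have A : (1 - b) * (1 - a ^ p) = a ^ p * (1 - a) := by
      linear_combination (1 - a) * h1 + (1 - b) * hga
    have B : (1 - a) * (1 - b ^ q) = b ^ q * (1 - b) := by
      linear_combination (1 - b) * h2 + (1 - a) * hgb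
    have h1' : 1 - b = a ^ p * (2 - a - b) := by linear_combination A
    have h2' : 1 - a = b ^ q * (2 - a - b) := by linear_combination B
    have hD : ((2:ℝ) - a - b) ≠ 0 := ne_of_gt (by linarith)
    constructor
    · have : (a ^ p + b ^ q) * (2 - a - b) = 1 * (2 - a - b) := by
        linear_combination -h1' - h2'
      exact mul_right_cancel₀ hD this
    · rw [h1', h2']; ring

/-- For integers `p, q ≥ 2`, the system `α^p + β^q = 1` and
`α^p (1-α) = β^q (1-β)` has a unique solution `(α, β) ∈ (0,1)²`. -/
theorem stmt_2 (p q : ℕ) (hp : 2 ≤ p) (hq : 2 ≤ q) :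
    ∃! ab : ℝ × ℝ, ab.1 ∈ Set.Ioo (0 : ℝ) 1 ∧ ab.2 ∈ Set.Ioo (0 : ℝ) 1 ∧
      ab.1 ^ p + ab.2 ^ q = 1 ∧
      ab.1 ^ p * (1 - ab.1) = ab.2 ^ q * (1 - ab.2) := by
  have hp1 : 1 ≤ p := by omega
  have hq1 : 1 ≤ q := by omega
  set G : ℝ → ℝ := fun x => 1 - fg q (1 - fg p x) - x with hGdef
  -- G is strictly decreasing on [0,1]
  have hGanti : StrictAntiOn G (Set.Icc 0 1) := by
    intro x hx y hy hxy
    obtain ⟨hx0, hx1⟩ := hx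
    obtain ⟨hy0, hy1⟩ := hy
    have hu : fg p x ≤ fg p y := fg_mono hp1 hx0 hxy.le
    have hvle : fg p y ≤ y := fg_le_self hp1 hy0
    have h1v : (0:ℝ) ≤ 1 - fg p y := by linarith
    have hlip : fg p y - fg p x < y - x := fg_lt hp hx0 hxy
    rcases eq_or_lt_of_le hu with heq | hlt
    · simp only [hGdef]
      rw [← heq]
      linarith
    · have hkey := fg_lt hq h1v (by linarith : 1 - fg p y < 1 - fg p x)
      simp only [hGdef]
      linarith
  -- continuity
  have hfgcont : ∀ r : ℕ, 1 ≤ r → ContinuousOn (fg r) (Set.Icc (0:ℝ) 1) := by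
    intro r hr
    exact ContinuousOn.div (continuous_pow r).continuousOn (Sg_cont r).continuousOn
      (fun x hx => (Sg_pos hr hx.1).ne')
  have hmaps : Set.MapsTo (fun x => 1 - fg p x) (Set.Icc (0:ℝ) 1) (Set.Icc (0:ℝ) 1) := by
    intro x hx
    have h1 := fg_nonneg hp1 hx.1
    have h2 := fg_le_self hp1 hx.1
    exact ⟨by dsimp only; linarith [hx.2], by dsimp only; linarith⟩
  have hGcont : ContinuousOn G (Set.Icc 0 1) := by
    have hinner : ContinuousOn (fun x => 1 - fg p x) (Set.Icc (0:ℝ) 1) :=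
      continuousOn_const.sub (hfgcont p hp1)
    have hcomp : ContinuousOn (fun x => fg q (1 - fg p x)) (Set.Icc (0:ℝ) 1) :=
      (hfgcont q hq1).comp hinner hmaps
    exact (continuousOn_const.sub hcomp).sub continuousOn_id
  -- endpoint values
  have hfg0 : fg p 0 = 0 := by
    simp [fg, zero_pow (by omega : p ≠ 0)]
  have hSg1 : ∀ r : ℕ, Sg r 1 = r := by intro r; simp [Sg]
  have hfg1 : ∀ r : ℕ, fg r 1 = 1 / r := by intro r; simp [fg, hSg1]
  have hqR : (2:ℝ) ≤ q := by exact_mod_cast hq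
  have hpR : (2:ℝ) ≤ p := by exact_mod_cast hp
  have hG0 : 0 < G 0 := by
    have : G 0 = 1 - 1 / q := by simp [hGdef, hfg0, hfg1]
    rw [this]
    have : 1 / (q:ℝ) ≤ 1/2 := by
      apply one_div_le_one_div_of_le <;> linarith
    linarith
  have hG1 : G 1 < 0 := by
    have h1p : (0:ℝ) < 1 - 1/p := by
      have : 1 / (p:ℝ) ≤ 1/2 := by
        apply one_div_le_one_div_of_le <;> linarith
      linarith
    have : G 1 = -fg q (1 - 1/p) := by simp [hGdef, hfg1]
    rw [this]
    have := fg_pos hq1 h1p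
    linarith
  -- IVT
  have hIVT := intermediate_value_Icc' (by norm_num : (0:ℝ) ≤ 1) hGcont
  have h0mem : (0:ℝ) ∈ Set.Icc (G 1) (G 0) := ⟨hG1.le, hG0.le⟩
  obtain ⟨α, hαIcc, hGα⟩ := hIVT h0mem
  have hα0 : 0 < α := by
    rcases eq_or_lt_of_le hαIcc.1 with h | h
    · exfalso; rw [← h] at hGα; linarith [hG0, hGα.symm.le]
    · exact h
  have hα1 : α < 1 := by
    rcases eq_or_lt_of_le hαIcc.2 with h | h
    · exfalso; rw [h] at hGα; linarith [hG1]
    · exact h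
  have hαIoo : α ∈ Set.Ioo (0:ℝ) 1 := ⟨hα0, hα1⟩
  set β : ℝ := 1 - fg p α with hβdef
  have hfαpos : 0 < fg p α := fg_pos hp1 hα0
  have hfαle : fg p α ≤ α := fg_le_self hp1 hα0.le
  have hβIoo : β ∈ Set.Ioo (0:ℝ) 1 := ⟨by simp only [hβdef]; linarith, by simp only [hβdef]; linarith⟩
  have hGα' : 1 - α = fg q β := by
    simp only [hGdef] at hGα
    simp only [hβdef]
    linarith
  have hsys := (sys_iff hp hq hαIoo hβIoo).mpr ⟨by simp [hβdef], hGα'⟩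
  refine ⟨(α, β), ⟨hαIoo, hβIoo, hsys.1, hsys.2⟩, ?_⟩
  rintro ⟨a, b⟩ ⟨haIoo, hbIoo, h1, h2⟩
  obtain ⟨e1, e2⟩ := (sys_iff hp hq haIoo hbIoo).mp ⟨h1, h2⟩
  have hGa : G a = 0 := by
    have hb' : 1 - fg p a = b := by linarith
    simp only [hGdef]
    rw [hb', ← e2]
    ring
  have haIcc : a ∈ Set.Icc (0:ℝ) 1 := ⟨haIoo.1.le, haIoo.2.le⟩
  have hae : a = α := hGanti.injOn haIcc hαIcc (hGa.trans hGα.symm)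
  have hbe : b = β := by
    simp only [hβdef]
    rw [← hae]
    linarith
  simp [hae, hbe]
end

section
/- If p = q ≥ 2, then (α, β) = (2^{-1/p}, 2^{-1/p}) is the unique solution in (0,1)² of the system α^p + β^q = 1 and α^p(1-α) = β^q(1-β). -/
lemma key_lt (p : ℕ) (hp : 2 ≤ p) {α β : ℝ} (hα0 : 0 < α) (hβ1 : β < 1)
    (hab : α < β) (h1 : α ^ p + β ^ p = 1) :
    β ^ p * (1 - β) < α ^ p * (1 - α) := by
  have hβ0 : 0 < β := hα0.trans hab
  have hp0 : p ≠ 0 := by omega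
  set c : ℝ := (p : ℝ) * β ^ (p - 1) with hc_def
  set B : ℝ := ∑ i ∈ Finset.range p, β ^ i with hB_def
  have hc : 0 < c := by
    have : (0:ℝ) < (p:ℝ) := by exact_mod_cast Nat.pos_of_ne_zero hp0
    positivity
  -- convexity: β^p - α^p < c * (β - α)
  have hconv : β ^ p - α ^ p < c * (β - α) := by
    have hfac : (∑ i ∈ Finset.range p, β ^ i * α ^ (p - 1 - i)) * (β - α) = β ^ p - α ^ p :=
      geom_sum₂_mul β α p
    have hsum : (∑ i ∈ Finset.range p, β ^ i * α ^ (p - 1 - i)) < ∑ _i ∈ Finset.range p, β ^ (p - 1) := by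
      apply Finset.sum_lt_sum
      · intro i hi
        have hi' : i ≤ p - 1 := by simp at hi; omega
        calc β ^ i * α ^ (p - 1 - i) ≤ β ^ i * β ^ (p - 1 - i) := by
              apply mul_le_mul_of_nonneg_left (pow_le_pow_left₀ hα0.le hab.le _) (by positivity)
          _ = β ^ (p - 1) := by rw [← pow_add]; congr 1; omega
      · refine ⟨0, Finset.mem_range.mpr (by omega), ?_⟩
        simp only [pow_zero, one_mul, Nat.sub_zero]
        exact pow_lt_pow_left₀ hab hα0.le (by omega)
    have hsum' : (∑ i ∈ Finset.range p, β ^ i * α ^ (p - 1 - i)) < c := by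
      rwa [Finset.sum_const, Finset.card_range, nsmul_eq_mul] at hsum
    calc β ^ p - α ^ p = (∑ i ∈ Finset.range p, β ^ i * α ^ (p - 1 - i)) * (β - α) := hfac.symm
      _ < c * (β - α) := by
          apply mul_lt_mul_of_pos_right hsum' (by linarith)
  -- B ≥ c
  have hB : c ≤ B := by
    have : ∑ _i ∈ Finset.range p, β ^ (p - 1) ≤ B := by
      apply Finset.sum_le_sum
      intro i hi
      exact pow_le_pow_of_le_one hβ0.le hβ1.le (by simp at hi; omega)
    rwa [Finset.sum_const, Finset.card_range, nsmul_eq_mul] at this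
  -- (1-β) * B = 1 - β^p
  have hBf : (1 - β) * B = 1 - β ^ p := by
    have := geom_sum_mul β p
    rw [hB_def]
    nlinarith [this]
  have hβ2 : 1 < 2 * β ^ p := by
    have : α ^ p < β ^ p := pow_lt_pow_left₀ hab hα0.le hp0
    linarith
  -- step: c*(1-β) + (2β^p - 1) < c*(1-α)
  have h2 : c * (1 - β) + (2 * β ^ p - 1) < c * (1 - α) := by nlinarith [hconv]
  have hBpos : 0 < B := lt_of_lt_of_le hc hB
  have h4 : B * (c * (1 - β) + (2 * β ^ p - 1)) < B * (c * (1 - α)) :=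
    mul_lt_mul_of_pos_left h2 hBpos
  have h5 : c * β ^ p ≤ B * (c * (1 - β) + (2 * β ^ p - 1)) := by
    have expand : B * (c * (1 - β) + (2 * β ^ p - 1))
        = c * ((1 - β) * B) + B * (2 * β ^ p - 1) := by ring
    rw [hBf] at expand
    have h6 : c * (2 * β ^ p - 1) ≤ B * (2 * β ^ p - 1) :=
      mul_le_mul_of_nonneg_right hB (by linarith)
    nlinarith [expand, h6]
  have h7 : β ^ p < B * (1 - α) := by
    have h8 : c * β ^ p < c * (B * (1 - α)) := by
      calc c * β ^ p ≤ B * (c * (1 - β) + (2 * β ^ p - 1)) := h5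
        _ < B * (c * (1 - α)) := h4
        _ = c * (B * (1 - α)) := by ring
    exact lt_of_mul_lt_mul_left h8 hc.le
  have hαp : α ^ p = 1 - β ^ p := by linarith
  have h9 : (1 - β) * β ^ p < (1 - β) * (B * (1 - α)) :=
    mul_lt_mul_of_pos_left h7 (by linarith)
  calc β ^ p * (1 - β) = (1 - β) * β ^ p := by ring
    _ < (1 - β) * (B * (1 - α)) := h9
    _ = ((1 - β) * B) * (1 - α) := by ring
    _ = (1 - β ^ p) * (1 - α) := by rw [hBf]
    _ = α ^ p * (1 - α) := by rw [hαp]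

/-- If `p = q ≥ 2`, then `(α, β) = (2^{-1/p}, 2^{-1/p})` is the unique solution
in `(0,1)²` of the system `α^p + β^q = 1` and `α^p(1-α) = β^q(1-β)`. -/
theorem stmt_4 (p : ℕ) (hp : 2 ≤ p) :
    ∀ α β : ℝ, α ∈ Set.Ioo (0 : ℝ) 1 → β ∈ Set.Ioo (0 : ℝ) 1 →
      ((α ^ p + β ^ p = 1 ∧ α ^ p * (1 - α) = β ^ p * (1 - β)) ↔
        (α = (2 : ℝ) ^ (-(1 : ℝ) / p) ∧ β = (2 : ℝ) ^ (-(1 : ℝ) / p))) := by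
  intro α β hα hβ
  have hp0 : p ≠ 0 := by omega
  have hpR : ((p : ℝ)) ≠ 0 := Nat.cast_ne_zero.mpr hp0
  have hpow : ((2 : ℝ) ^ (-(1 : ℝ) / p)) ^ p = 1 / 2 := by
    rw [← Real.rpow_natCast ((2:ℝ) ^ (-(1 : ℝ) / p)) p, ← Real.rpow_mul (by norm_num)]
    rw [show (-(1 : ℝ) / p) * (p : ℝ) = -1 by field_simp]
    norm_num [Real.rpow_neg_one]
  constructor
  · rintro ⟨h1, h2⟩
    rcases lt_trichotomy α β with h | h | h
    · exact absurd h2 (by have := key_lt p hp hα.1 hβ.2 h h1; intro e; linarith)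
    · subst h
      have hhalf : α ^ p = 1 / 2 := by linarith
      have : α = ((1:ℝ)/2) ^ ((p : ℝ)⁻¹) := by
        rw [← hhalf, Real.pow_rpow_inv_natCast hα.1.le hp0]
      have e2 : (2 : ℝ) ^ (-(1 : ℝ) / p) = ((1:ℝ)/2) ^ ((p : ℝ)⁻¹) := by
        rw [show (-(1 : ℝ) / p) = -((p : ℝ)⁻¹) by ring, Real.rpow_neg (by norm_num),
          one_div, Real.inv_rpow (by norm_num)]
      exact ⟨by rw [e2, ← this], by rw [e2, ← this]⟩
    · have h1' : β ^ p + α ^ p = 1 := by linarith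
      exact absurd h2 (by have := key_lt p hp hβ.1 hα.2 h h1'; intro e; linarith)
  · rintro ⟨rfl, rfl⟩
    refine ⟨?_, rfl⟩
    rw [hpow]; norm_num
end

section
/- Let w ∈ (0,1]² and set G(w₂,w₃) = w₂(w₂+2w₃)/((1+w₂+w₃)(w₂+w₃) - w₃²) and H(w₂,w₃) = w₃(2w₂+w₃)/((1+w₂+w₃)(w₂+w₃) - w₂²). Then the system G(w₂,w₃) = w₂ and H(w₂,w₃) = w₃ with w₂w₃ ≠ 0 has the unique solution w₂ = w₃ = 1/3 in (0,1]². -/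
/-- For the cone graph with `w₁ = 1`: the system
`G(w₂,w₃) = w₂`, `H(w₂,w₃) = w₃` with
`G(w₂,w₃) = w₂(w₂+2w₃)/((1+w₂+w₃)(w₂+w₃) - w₃²)` and
`H(w₂,w₃) = w₃(2w₂+w₃)/((1+w₂+w₃)(w₂+w₃) - w₂²)`
has the unique solution `w₂ = w₃ = 1/3` in `(0,1]²`. -/
theorem stmt_14 :
    ∀ w₂ w₃ : ℝ, w₂ ∈ Set.Ioc (0 : ℝ) 1 → w₃ ∈ Set.Ioc (0 : ℝ) 1 →
      ((w₂ * (w₂ + 2 * w₃) / ((1 + w₂ + w₃) * (w₂ + w₃) - w₃ ^ 2) = w₂ ∧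
        w₃ * (2 * w₂ + w₃) / ((1 + w₂ + w₃) * (w₂ + w₃) - w₂ ^ 2) = w₃) ↔
        (w₂ = 1 / 3 ∧ w₃ = 1 / 3)) := by
  intro w₂ w₃ h2 h3
  obtain ⟨h2p, h2le⟩ := h2
  obtain ⟨h3p, h3le⟩ := h3
  have hd3 : (1 + w₂ + w₃) * (w₂ + w₃) - w₃ ^ 2 ≠ 0 := by nlinarith
  have hd2 : (1 + w₂ + w₃) * (w₂ + w₃) - w₂ ^ 2 ≠ 0 := by nlinarith
  constructor
  · rintro ⟨e1, e2⟩
    rw [div_eq_iff hd3] at e1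
    rw [div_eq_iff hd2] at e2
    have c1 : w₂ + 2 * w₃ = (1 + w₂ + w₃) * (w₂ + w₃) - w₃ ^ 2 := by
      have := mul_left_cancel₀ (ne_of_gt h2p) (by linarith [e1] : w₂ * (w₂ + 2 * w₃) = w₂ * ((1 + w₂ + w₃) * (w₂ + w₃) - w₃ ^ 2))
      exact this
    have c2 : 2 * w₂ + w₃ = (1 + w₂ + w₃) * (w₂ + w₃) - w₂ ^ 2 := by
      have := mul_left_cancel₀ (ne_of_gt h3p) (by linarith [e2] : w₃ * (2 * w₂ + w₃) = w₃ * ((1 + w₂ + w₃) * (w₂ + w₃) - w₂ ^ 2))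
      exact this
    have heq : w₂ = w₃ := by
      have hfac : (w₂ - w₃) * (1 + w₂ + w₃) = 0 := by nlinarith
      have : w₂ - w₃ = 0 := by
        rcases mul_eq_zero.1 hfac with h | h
        · exact h
        · nlinarith
      linarith
    have hw : w₂ = 1 / 3 := by
      have h9 : w₂ = 3 * w₂ ^ 2 := by nlinarith [c1, heq]
      have : 3 * w₂ * (w₂ - 1/3) = 0 := by nlinarith
      rcases mul_eq_zero.1 this with h | h
      · nlinarith
      · linarith
    exact ⟨hw, heq ▸ hw⟩
  · rintro ⟨rfl, rfl⟩
    norm_num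
end
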